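/- arXiv:1501.04826 — 6 statements merged into one kernel-verified Lean document; each statement's English description precedes it below -/
import Mathlib

section
/- Let γ be a confidence parameter with 0 < γ < 1 and let X₀ → Y₀ and X₁ → Y₁ be two partial implications over the attribute set [n]. Then the following are equivalent: (1) X₁ → Y₁ ⊨_γ X₀ → Y₀; (2) either Y₀ ⊆ X₀, or both X₁ ⊆ X₀ and X₀Y₀ ⊆ X₁Y₁. -/
/-!
Sufficiency is monotonicity of the counts: `C[X₀] ≤ C[X₁]` and `C[X₁Y₁] ≤ C[X₀Y₀]`.
For necessity, a dataset with a transaction `X₀` and none containing `X₀Y₀` violates `X₀ → Y₀`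
as soon as `Y₀ ⊈ X₀`. The single transaction `X₀` already satisfies `X₁ → Y₁` vacuously unless
`X₁ ⊆ X₀`; in that case `⌈γ / (1 - γ)⌉` extra copies of `X₁Y₁` push the confidence of `X₁ → Y₁`
up to `γ` while still no transaction contains `X₀Y₀`, provided `X₀Y₀ ⊈ X₁Y₁`.
-/

open Finset

/-- Number of transactions in the dataset `D` that cover `X`, counted with multiplicity. -/
def cntD {n : ℕ} (D : Multiset (Finset (Fin n))) (X : Finset (Fin n)) : ℕ :=
  (D.filter (fun Z => X ⊆ Z)).card

/-- `D ⊨_γ X → Y` : either no transaction covers `X`, or the confidence of `X → Y` is ≥ γ. -/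
def satPI {n : ℕ} (γ : ℝ) (D : Multiset (Finset (Fin n))) (X Y : Finset (Fin n)) : Prop :=
  cntD D X = 0 ∨ γ * (cntD D X : ℝ) ≤ (cntD D (X ∪ Y) : ℝ)

/-- Entailment at confidence threshold γ from the premises indexed by `L`. -/
def entailsFrom {n k : ℕ} (γ : ℝ) (P : Fin k → Finset (Fin n) × Finset (Fin n))
    (L : Finset (Fin k)) (X₀ Y₀ : Finset (Fin n)) : Prop :=
  ∀ D : Multiset (Finset (Fin n)),
    (∀ i ∈ L, satPI γ D (P i).1 (P i).2) → satPI γ D X₀ Y₀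

/-- Proper entailment from the premises indexed by `L`: the entailment holds,
and it fails from every proper subset of the premises. -/
def properFrom {n k : ℕ} (γ : ℝ) (P : Fin k → Finset (Fin n) × Finset (Fin n))
    (L : Finset (Fin k)) (X₀ Y₀ : Finset (Fin n)) : Prop :=
  entailsFrom γ P L X₀ Y₀ ∧ ∀ L' ⊂ L, ¬ entailsFrom γ P L' X₀ Y₀

/-- The weight `w_Z(X → Y)`: `1-γ` if `Z` witnesses, `-γ` if `Z` violates, `0` otherwise. -/
noncomputable def wt {n : ℕ} (γ : ℝ) (Z X Y : Finset (Fin n)) : ℝ :=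
  if X ∪ Y ⊆ Z then 1 - γ else if X ⊆ Z then -γ else 0

/-- The premises indexed by `L` enforce homogeneity. -/
def homogFrom {n k : ℕ} (P : Fin k → Finset (Fin n) × Finset (Fin n))
    (L : Finset (Fin k)) : Prop :=
  ∀ Z : Finset (Fin n),
    (∀ i ∈ L, ¬ (P i).1 ⊆ Z ∨ (P i).1 ∪ (P i).2 ⊆ Z) →
    ((∀ i ∈ L, ¬ (P i).1 ⊆ Z) ∨ (∀ i ∈ L, (P i).1 ∪ (P i).2 ⊆ Z))

/-- The critical threshold `γ*({Xᵢ → Yᵢ : i ∈ L}, X)`. -/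
noncomputable def gammaStar {n k : ℕ} (P : Fin k → Finset (Fin n) × Finset (Fin n))
    (L : Finset (Fin k)) (X : Finset (Fin n)) : ℝ :=
  sInf { r : ℝ | ∃ lam : Fin k → ℝ, (∀ i ∈ L, 0 ≤ lam i) ∧ (∑ i ∈ L, lam i) = 1 ∧
    r = (Finset.univ.filter (fun Z : Finset (Fin n) => ¬ X ⊆ Z)).fold max 0
          (fun Z => (∑ i ∈ L.filter (fun i => (P i).1 ∪ (P i).2 ⊆ Z), lam i) /
                    (∑ i ∈ L.filter (fun i => (P i).1 ⊆ Z), lam i)) }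

section Counting

variable {n : ℕ}

lemma cntD_add (D₁ D₂ : Multiset (Finset (Fin n))) (X : Finset (Fin n)) :
    cntD (D₁ + D₂) X = cntD D₁ X + cntD D₂ X := by
  simp [cntD, Multiset.filter_add]

lemma cntD_replicate (a : ℕ) (S X : Finset (Fin n)) :
    cntD (Multiset.replicate a S) X = if X ⊆ S then a else 0 := by
  unfold cntD
  split_ifs with h
  · rw [Multiset.filter_eq_self.2 fun Z hZ => Multiset.eq_of_mem_replicate hZ ▸ h,
      Multiset.card_replicate]
  · rw [Multiset.filter_eq_nil.2 fun Z hZ => Multiset.eq_of_mem_replicate hZ ▸ h,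
      Multiset.card_zero]

lemma cntD_singleton (S X : Finset (Fin n)) :
    cntD {S} X = if X ⊆ S then 1 else 0 := by
  simpa using cntD_replicate 1 S X

lemma cntD_antitone (D : Multiset (Finset (Fin n))) {X X' : Finset (Fin n)} (h : X ⊆ X') :
    cntD D X' ≤ cntD D X :=
  Multiset.card_le_card <| Multiset.monotone_filter_right _ fun _ hZ => h.trans hZ

end Counting

section Satisfaction

variable {n : ℕ} {γ : ℝ} {D : Multiset (Finset (Fin n))} {X Y X₀ Y₀ X₁ Y₁ : Finset (Fin n)}

lemma satPI_of_subset (hγ : γ ≤ 1) (h : Y ⊆ X) : satPI γ D X Y := by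
  right
  rw [union_eq_left.2 h]
  exact mul_le_of_le_one_left (Nat.cast_nonneg _) hγ

lemma satPI.of_subset (hD : satPI γ D X₁ Y₁) (hγ : 0 ≤ γ) (hX : X₁ ⊆ X₀)
    (hXY : X₀ ∪ Y₀ ⊆ X₁ ∪ Y₁) : satPI γ D X₀ Y₀ := by
  have hX' := cntD_antitone D hX
  rcases hD with h | h
  · exact Or.inl (by omega)
  · right
    calc γ * (cntD D X₀ : ℝ) ≤ γ * cntD D X₁ := by gcongr
      _ ≤ cntD D (X₁ ∪ Y₁) := h
      _ ≤ cntD D (X₀ ∪ Y₀) := by exact_mod_cast cntD_antitone D hXY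

lemma not_satPI_of_cntD_union_eq_zero (hγ : 0 < γ) (hX : cntD D X ≠ 0)
    (hXY : cntD D (X ∪ Y) = 0) : ¬ satPI γ D X Y := by
  rintro (h | h)
  · exact hX h
  · rw [hXY, Nat.cast_zero] at h
    have : (0 : ℝ) < cntD D X := by exact_mod_cast Nat.pos_of_ne_zero hX
    nlinarith

lemma satPI_replicate_add_singleton (hγ₀ : 0 ≤ γ) (hγ₁ : γ < 1) (Z : Finset (Fin n)) :
    satPI γ (Multiset.replicate ⌈γ / (1 - γ)⌉₊ (X ∪ Y) + {Z}) X Y := by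
  set a := ⌈γ / (1 - γ)⌉₊
  right
  have hX : cntD (Multiset.replicate a (X ∪ Y) + {Z}) X ≤ a + 1 := by
    rw [cntD_add, cntD_replicate, cntD_singleton, if_pos subset_union_left]
    split_ifs <;> omega
  have hXY : a ≤ cntD (Multiset.replicate a (X ∪ Y) + {Z}) (X ∪ Y) := by
    rw [cntD_add, cntD_replicate, if_pos subset_rfl]
    exact Nat.le_add_right _ _
  have ha : γ ≤ (1 - γ) * a := by
    have := Nat.le_ceil (γ / (1 - γ))
    rw [div_le_iff₀ (by linarith)] at this
    linarith
  calc γ * (cntD (Multiset.replicate a (X ∪ Y) + {Z}) X : ℝ) ≤ γ * (a + 1) := by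
        gcongr; exact_mod_cast hX
    _ ≤ a := by linarith
    _ ≤ _ := by exact_mod_cast hXY

end Satisfaction

theorem stmt1 {n : ℕ} (γ : ℝ) (hγ0 : 0 < γ) (hγ1 : γ < 1)
    (X₀ Y₀ X₁ Y₁ : Finset (Fin n)) :
    (∀ D : Multiset (Finset (Fin n)), satPI γ D X₁ Y₁ → satPI γ D X₀ Y₀) ↔
      (Y₀ ⊆ X₀ ∨ (X₁ ⊆ X₀ ∧ X₀ ∪ Y₀ ⊆ X₁ ∪ Y₁)) := by
  constructor
  · intro h
    by_contra! hc
    obtain ⟨hY, hXY⟩ := hc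
    have hX₀Y₀ : ¬ X₀ ∪ Y₀ ⊆ X₀ := fun h' => hY (union_subset_iff.1 h').2
    by_cases hX : X₁ ⊆ X₀
    · refine not_satPI_of_cntD_union_eq_zero hγ0 ?_ ?_
        (h _ (satPI_replicate_add_singleton hγ0.le hγ1 X₀))
      · simp [cntD_add, cntD_singleton]
      · simp [cntD_add, cntD_replicate, cntD_singleton, hXY hX, hX₀Y₀]
    · exact not_satPI_of_cntD_union_eq_zero hγ0 (by simp [cntD_singleton])
        (by simp [cntD_singleton, hX₀Y₀]) (h {X₀} (Or.inl (by simp [cntD_singleton, hX])))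
  · rintro (hY | ⟨hX, hXY⟩) D hD
    · exact satPI_of_subset hγ1.le hY
    · exact hD.of_subset hγ0.le hX hXY
end

section
/- On the attribute set {A, B, C, D}, for every confidence parameter γ with 1/2 ≤ γ < 1, the entailment {A} → {B,C}, {A} → {B,D} ⊨_γ {A,C,D} → {B} holds; that is, every dataset in which both {A} → {B,C} and {A} → {B,D} have confidence at least γ also gives confidence at least γ to {A,C,D} → {B}. -/
open Finset

/-! The support count `C_D` is antitone and supermodular,
`C[X] + C[Y] ≤ C[X ∩ Y] + C[X ∪ Y]`. This gives `C[ABC] + C[ABD] ≤ C[AB] + C[ABCD]` and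
`C[ACD] + C[AB] ≤ C[A] + C[ABCD]`; together with `γ C[A] ≤ C[ABC], C[ABD]` and
`C[ABC] ≤ C[AB]` these combine, with the nonnegative weights `γ`, `1 - γ` and `2γ - 1`,
into `γ C[ACD] ≤ C[ABCD]`. -/

section Counting

variable {n : ℕ} (D : Multiset (Finset (Fin n)))

lemma cntD_anti {X Y : Finset (Fin n)} (h : X ⊆ Y) : cntD D Y ≤ cntD D X :=
  Multiset.card_le_card <| Multiset.monotone_filter_right D fun _ hY => h.trans hY

lemma cntD_add_cntD_le (X Y : Finset (Fin n)) :
    cntD D X + cntD D Y ≤ cntD D (X ∩ Y) + cntD D (X ∪ Y) := by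
  have hsplit := congrArg Multiset.card
    (Multiset.filter_add_filter (fun Z => X ⊆ Z) (fun Z => Y ⊆ Z) D)
  simp only [Multiset.card_add] at hsplit
  simp only [cntD, hsplit, union_subset_iff]
  gcongr
  exact Multiset.monotone_filter_right D fun _ hXY =>
    hXY.elim (inter_subset_left.trans ·) (inter_subset_right.trans ·)

lemma satPI_iff {γ : ℝ} {X Y : Finset (Fin n)} :
    satPI γ D X Y ↔ γ * (cntD D X : ℝ) ≤ cntD D (X ∪ Y) := by
  refine ⟨fun h => h.elim (fun h0 => ?_) id, Or.inr⟩
  rw [h0, Nat.cast_zero, mul_zero]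
  exact Nat.cast_nonneg _

end Counting

lemma mul_le_of_supermodular_counts {γ a ab abc abd acd abcd : ℝ}
    (hγ0 : 1/2 ≤ γ) (hγ1 : γ < 1) (hc : γ * a ≤ abc) (hd : γ * a ≤ abd)
    (habc : abc ≤ ab) (h₁ : abc + abd ≤ ab + abcd) (h₂ : acd + ab ≤ a + abcd) :
    γ * acd ≤ abcd := by
  nlinarith [mul_le_mul_of_nonneg_left h₂ (by linarith : (0:ℝ) ≤ γ),
    mul_le_mul_of_nonneg_left h₁ (by linarith : (0:ℝ) ≤ 1 - γ),
    mul_le_mul_of_nonneg_left (add_le_add hc hd) (by linarith : (0:ℝ) ≤ 1 - γ),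
    mul_le_mul_of_nonneg_left (hc.trans habc) (by linarith : (0:ℝ) ≤ 2 * γ - 1)]

theorem stmt3 (γ : ℝ) (hγ0 : 1/2 ≤ γ) (hγ1 : γ < 1) :
    ∀ D : Multiset (Finset (Fin 4)),
      satPI γ D {0} {1, 2} → satPI γ D {0} {1, 3} →
      satPI γ D {0, 2, 3} {1} := by
  intro D hABC hABD
  rw [satPI_iff] at hABC hABD ⊢
  rw [show ({0} ∪ {1, 2} : Finset (Fin 4)) = {0, 1, 2} by decide] at hABC
  rw [show ({0} ∪ {1, 3} : Finset (Fin 4)) = {0, 1, 3} by decide] at hABD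
  rw [show ({0, 2, 3} ∪ {1} : Finset (Fin 4)) = {0, 1, 2, 3} by decide]
  have h₁ := cntD_add_cntD_le D {0, 1, 2} {0, 1, 3}
  rw [show ({0, 1, 2} ∩ {0, 1, 3} : Finset (Fin 4)) = {0, 1} by decide,
    show ({0, 1, 2} ∪ {0, 1, 3} : Finset (Fin 4)) = {0, 1, 2, 3} by decide] at h₁
  have h₂ := cntD_add_cntD_le D {0, 2, 3} {0, 1}
  rw [show ({0, 2, 3} ∩ {0, 1} : Finset (Fin 4)) = {0} by decide,
    show ({0, 2, 3} ∪ {0, 1} : Finset (Fin 4)) = {0, 1, 2, 3} by decide] at h₂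
  have habc := cntD_anti D (show ({0, 1} : Finset (Fin 4)) ⊆ {0, 1, 2} by decide)
  exact mul_le_of_supermodular_counts (ab := cntD D {0, 1}) hγ0 hγ1 hABC hABD
    (by exact_mod_cast habc) (by exact_mod_cast h₁) (by exact_mod_cast h₂)
end

section
/- Let γ be a confidence parameter in [0,1] and let X₀ → Y₀, X₁ → Y₁, …, X_k → Y_k be partial implications over the attribute set [n]. Then the following are equivalent: (1) X₁ → Y₁, …, X_k → Y_k ⊨_γ X₀ → Y₀; (2) there exists a vector λ = (λ₁,…,λ_k) of nonnegative reals such that for every transaction Z ⊆ [n], ∑_{i=1}^{k} λ_i · w_Z(X_i → Y_i) ≤ w_Z(X₀ → Y₀). -/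
open Finset

/-!
By the counting identity `Σ_{Z ∈ D} w_Z(X → Y) = C_D[XY] - γ C_D[X]`, a dataset satisfies
`X → Y` exactly when its total weight on `X → Y` is nonnegative, and only the multiplicity
vector `m : Finset (Fin n) → ℕ` of `D` matters. So entailment says: every `m` with nonnegative
weight on all premises has nonnegative weight on the conclusion, which a certificate `λ` gives
at once. Conversely, if no `λ` exists, Farkas' lemma (finitely generated cones are closed, by
conic Carathéodory) yields a real `y ≥ 0` with nonnegative weight on the premises and negative
weight on the conclusion. For `γ < 1`, adding a little mass at `Z = [n]`, which witnesses every
implication with weight `1 - γ > 0`, makes all these inequalities strict with a uniform margin,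
and `m = ⌊N y⌋` for large `N` is a counterexample dataset. For `γ ≥ 1` all weights are `≤ 0`
and the support of `y` already is one.
-/

section ConicHull

variable {ι E : Type*} [AddCommGroup E] [Module ℝ E]

def coneOn (v : ι → E) (s : Finset ι) : Set E :=
  {x | ∃ μ : ι → ℝ, (∀ i ∈ s, 0 ≤ μ i) ∧ ∑ i ∈ s, μ i • v i = x}

lemma coneOn_mono {v : ι → E} {s t : Finset ι} (hst : s ⊆ t) : coneOn v s ⊆ coneOn v t := by
  classical
  rintro x ⟨μ, hμ, rfl⟩
  refine ⟨fun i => if i ∈ s then μ i else 0, fun i _ => ?_, ?_⟩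
  · dsimp only
    split_ifs with hi
    exacts [hμ i hi, le_rfl]
  · simp only [ite_smul, zero_smul, sum_ite_mem, inter_eq_right.2 hst]

lemma exists_mem_coneOn_erase [DecidableEq ι] {v : ι → E} {s : Finset ι} {x : E}
    (hx : x ∈ coneOn v s) (hs : ¬ LinearIndepOn ℝ v (s : Set ι)) :
    ∃ j ∈ s, x ∈ coneOn v (s.erase j) := by
  obtain ⟨μ, hμ, rfl⟩ := hx
  obtain ⟨g, hg, i₀, hi₀, hgi₀⟩ := not_linearIndepOn_finset_iff.1 hs
  wlog hpos : 0 < g i₀ generalizing g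
  · exact this (-g) (by simp [neg_smul, hg]) (neg_ne_zero.2 hgi₀)
      (neg_pos.2 (lt_of_le_of_ne (not_lt.1 hpos) hgi₀))
  -- move along `-g` until the first coefficient hits zero
  obtain ⟨j, hjF, hjmin⟩ := (s.filter (0 < g ·)).exists_min_image (fun i => μ i / g i)
    ⟨i₀, mem_filter.2 ⟨hi₀, hpos⟩⟩
  obtain ⟨hj, hgj⟩ := mem_filter.1 hjF
  set t := μ j / g j
  have ht : 0 ≤ t := div_nonneg (hμ j hj) hgj.le
  refine ⟨j, hj, fun i => μ i - t * g i, fun i hi => ?_, ?_⟩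
  · have hi := mem_of_mem_erase hi
    rcases le_or_gt (g i) 0 with hgi | hgi
    · nlinarith [hμ i hi]
    · have := hjmin i (mem_filter.2 ⟨hi, hgi⟩)
      rw [le_div_iff₀ hgi] at this
      linarith
  · rw [sum_erase _ (by simp [t, div_mul_cancel₀ _ hgj.ne'])]
    simp only [sub_smul, sum_sub_distrib, mul_smul, ← smul_sum, hg, smul_zero, sub_zero]

lemma exists_linearIndepOn_of_mem_coneOn {v : ι → E} {s : Finset ι} {x : E}
    (hx : x ∈ coneOn v s) : ∃ t ⊆ s, LinearIndepOn ℝ v (t : Set ι) ∧ x ∈ coneOn v t := by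
  classical
  obtain ⟨t, ht, htmin⟩ := (s.powerset.filter (x ∈ coneOn v ·)).exists_min_image card
    ⟨s, mem_filter.2 ⟨mem_powerset_self s, hx⟩⟩
  obtain ⟨hts, hxt⟩ := mem_filter.1 ht
  refine ⟨t, mem_powerset.1 hts, not_not.1 fun hli => ?_, hxt⟩
  obtain ⟨j, hj, hxj⟩ := exists_mem_coneOn_erase hxt hli
  have := htmin (t.erase j)
    (mem_filter.2 ⟨mem_powerset.2 ((erase_subset j t).trans (mem_powerset.1 hts)), hxj⟩)
  rw [card_erase_of_mem hj] at this
  have := card_pos.2 ⟨j, hj⟩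
  omega

variable [TopologicalSpace E] [IsTopologicalAddGroup E] [ContinuousSMul ℝ E] [T2Space E]

lemma isClosed_coneOn_of_linearIndepOn {v : ι → E} {s : Finset ι}
    (hs : LinearIndepOn ℝ v (s : Set ι)) : IsClosed (coneOn v s) := by
  classical
  set L := Fintype.linearCombination ℝ (fun i : s => v i)
  have hL : Topology.IsClosedEmbedding L :=
    LinearMap.isClosedEmbedding_of_injective (LinearMap.ker_eq_bot.2
      hs.fintypeLinearCombination_injective)
  have himage : coneOn v s = L '' Set.Ici 0 := by
    ext x
    simp only [coneOn, Set.mem_ofPred_eq, Set.mem_image, Set.mem_Ici, L,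
      Fintype.linearCombination_apply]
    constructor
    · rintro ⟨μ, hμ, rfl⟩
      exact ⟨fun i => μ i, fun i => hμ i i.2, sum_coe_sort s fun i => μ i • v i⟩
    · rintro ⟨c, hc, rfl⟩
      refine ⟨fun i => if h : i ∈ s then c ⟨i, h⟩ else 0,
        fun i hi => by simpa [hi] using hc ⟨i, hi⟩, ?_⟩
      rw [← sum_coe_sort s]
      exact sum_congr rfl fun i _ => by simp [i.2]
  rw [himage]
  exact hL.isClosedMap _ isClosed_Ici

lemma isClosed_coneOn (v : ι → E) (s : Finset ι) : IsClosed (coneOn v s) := by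
  classical
  set S := s.powerset.filter fun t : Finset ι => LinearIndepOn ℝ v (t : Set ι)
  have : coneOn v s = ⋃ (t : Finset ι) (_ : t ∈ S), coneOn v t := by
    refine subset_antisymm (fun x hx => ?_) (Set.iUnion₂_subset fun t ht => coneOn_mono ?_)
    · obtain ⟨t, hts, hli, hxt⟩ := exists_linearIndepOn_of_mem_coneOn hx
      exact Set.mem_biUnion (mem_filter.2 ⟨mem_powerset.2 hts, hli⟩) hxt
    · exact mem_powerset.1 (mem_filter.1 ht).1
  rw [this]
  exact isClosed_biUnion_finset fun t ht => isClosed_coneOn_of_linearIndepOn (mem_filter.1 ht).2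

end ConicHull

section Farkas

variable {κ ι : Type*} [Fintype κ] [Fintype ι]

lemma exists_certificate_of_not_exists_nonneg_comb (A : κ → ι → ℝ) (c : ι → ℝ)
    (h : ¬ ∃ lam : κ → ℝ, (∀ i, 0 ≤ lam i) ∧ ∀ Z, ∑ i, lam i * A i Z ≤ c Z) :
    ∃ y : ι → ℝ, (∀ Z, 0 ≤ y Z) ∧ (∀ i, 0 ≤ ∑ Z, y Z * A i Z) ∧ ∑ Z, y Z * c Z < 0 := by
  classical
  set v : κ ⊕ ι → ι → ℝ := Sum.elim A fun Z => Pi.single Z 1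
  let K : ProperCone ℝ (ι → ℝ) :=
    ⟨(PointedCone.positive ℝ (κ ⊕ ι → ℝ)).map (Fintype.linearCombination ℝ v), by
      convert isClosed_coneOn v univ
      ext x
      simp [coneOn, Fintype.linearCombination_apply, Pi.le_def]⟩
  have hK : ∀ {x}, x ∈ K ↔ ∃ μ : κ ⊕ ι → ℝ, 0 ≤ μ ∧ ∑ j, μ j • v j = x := by
    intro x
    simp [K, Fintype.linearCombination_apply]
  have hv : ∀ j, v j ∈ K := fun j => hK.2 ⟨Pi.single j 1, by simp, by simp [Pi.single_apply]⟩
  have hc : c ∉ K := fun hc => by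
    obtain ⟨μ, hμ, hμc⟩ := hK.1 hc
    refine h ⟨fun i => μ (.inl i), fun i => hμ _, fun Z => ?_⟩
    show ∑ i, μ (.inl i) * A i Z ≤ c Z
    have := congrFun hμc Z
    simp only [v, Finset.sum_apply, Pi.smul_apply, smul_eq_mul, Fintype.sum_sum_type, Sum.elim_inl,
      Sum.elim_inr, Pi.single_apply, mul_ite, mul_one, mul_zero, sum_ite_eq, mem_univ,
      if_true] at this
    linarith [show 0 ≤ μ (.inr Z) from hμ _]
  obtain ⟨f, hfK, hfc⟩ := K.hyperplane_separation_point hc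
  have hf : ∀ x : ι → ℝ, f x = ∑ Z, x Z * f (Pi.single Z 1) := by
    intro x
    conv_lhs => rw [pi_eq_sum_univ' x]
    simp only [map_sum, map_smul, smul_eq_mul]
  refine ⟨fun Z => f (Pi.single Z 1), fun Z => hfK _ (hv (.inr Z)), fun i => ?_, ?_⟩
  · have := hfK _ (hv (.inl i))
    rw [hf] at this
    simpa [v, mul_comm] using this
  · rw [hf] at hfc
    simpa [mul_comm] using hfc

lemma sum_mul_nonneg_of_nonneg_comb_le {A : κ → ι → ℝ} {c : ι → ℝ} {lam : κ → ℝ}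
    (hlam₀ : ∀ i, 0 ≤ lam i) (hlam : ∀ Z, ∑ i, lam i * A i Z ≤ c Z) {m : ι → ℝ}
    (hm : ∀ Z, 0 ≤ m Z) (hprem : ∀ i, 0 ≤ ∑ Z, m Z * A i Z) : 0 ≤ ∑ Z, m Z * c Z :=
  calc 0 ≤ ∑ i, lam i * ∑ Z, m Z * A i Z := sum_nonneg fun i _ => mul_nonneg (hlam₀ i) (hprem i)
    _ = ∑ Z, m Z * ∑ i, lam i * A i Z := by
      simp only [mul_sum]
      rw [sum_comm]
      exact sum_congr rfl fun _ _ => sum_congr rfl fun _ _ => by ring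
    _ ≤ ∑ Z, m Z * c Z := sum_le_sum fun Z _ => mul_le_mul_of_nonneg_left (hlam Z) (hm Z)

end Farkas

section Counts

variable {n : ℕ}

lemma cntD_eq_sum_count (D : Multiset (Finset (Fin n))) (X : Finset (Fin n)) :
    cntD D X = ∑ Z, if X ⊆ Z then D.count Z else 0 := by
  classical
  rw [cntD, ← Multiset.sum_count_eq_card (s := univ) fun _ _ => mem_univ _]
  simp [Multiset.count_filter]

lemma wt_eq (γ : ℝ) (Z X Y : Finset (Fin n)) :
    wt γ Z X Y = (if X ∪ Y ⊆ Z then 1 else 0) - γ * if X ⊆ Z then 1 else 0 := by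
  have : X ∪ Y ⊆ Z → X ⊆ Z := subset_union_left.trans
  unfold wt
  split_ifs <;> simp_all

lemma satPI_iff_sum_count_mul_wt (γ : ℝ) (D : Multiset (Finset (Fin n))) (X Y : Finset (Fin n)) :
    satPI γ D X Y ↔ 0 ≤ ∑ Z, (D.count Z : ℝ) * wt γ Z X Y := by
  have hsum : ∑ Z, (D.count Z : ℝ) * wt γ Z X Y = cntD D (X ∪ Y) - γ * cntD D X := by
    simp only [wt_eq, cntD_eq_sum_count, mul_sub, sum_sub_distrib]
    push_cast
    rw [mul_sum]
    congr 1 <;> exact sum_congr rfl fun Z _ => by split_ifs <;> ring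
  have hmono : cntD D (X ∪ Y) ≤ cntD D X :=
    Multiset.card_le_card (Multiset.monotone_filter_right _ fun _ => subset_union_left.trans)
  rw [hsum, satPI, sub_nonneg]
  refine ⟨fun h => h.elim (fun h0 => ?_) id, Or.inr⟩
  simp_all

lemma entailsFrom_iff_forall_counts (γ : ℝ) {k : ℕ} (P : Fin k → Finset (Fin n) × Finset (Fin n))
    (L : Finset (Fin k)) (X₀ Y₀ : Finset (Fin n)) :
    entailsFrom γ P L X₀ Y₀ ↔ ∀ m : Finset (Fin n) → ℕ,
      (∀ i ∈ L, 0 ≤ ∑ Z, (m Z : ℝ) * wt γ Z (P i).1 (P i).2) →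
        0 ≤ ∑ Z, (m Z : ℝ) * wt γ Z X₀ Y₀ := by
  classical
  simp only [entailsFrom, satPI_iff_sum_count_mul_wt]
  refine ⟨fun h m hm => ?_, fun h D => h D.count⟩
  have hcount : ∀ Z, (∑ W, m W • {W} : Multiset (Finset (Fin n))).count Z = m Z := by
    simp [Multiset.count_sum', Multiset.count_singleton]
  simpa [hcount] using h (∑ W, m W • {W}) (by simpa [hcount] using hm)

end Counts

section Rounding

variable {κ ι : Type*} [Fintype ι]

lemma abs_sum_floor_mul_sub_le {y : ι → ℝ} (hy : ∀ Z, 0 ≤ y Z) (N : ℕ) {w : ι → ℝ} {B : ℝ}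
    (hw : ∀ Z, |w Z| ≤ B) :
    |∑ Z, (⌊N * y Z⌋₊ : ℝ) * w Z - N * ∑ Z, y Z * w Z| ≤ Fintype.card ι * B := by
  rw [mul_sum, ← sum_sub_distrib]
  refine (abs_sum_le_sum_abs _ _).trans ?_
  rw [← nsmul_eq_mul, ← card_univ, ← sum_const]
  refine sum_le_sum fun Z _ => ?_
  have h₁ := Nat.floor_le (mul_nonneg N.cast_nonneg (hy Z))
  have h₂ := Nat.lt_floor_add_one ((N : ℝ) * y Z)
  rw [← mul_assoc, ← sub_mul, abs_mul]
  calc _ ≤ 1 * B := mul_le_mul (abs_le.2 ⟨by linarith, by linarith⟩) (hw Z) (abs_nonneg _)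
        zero_le_one
    _ = B := one_mul B

lemma exists_nat_of_margin {w : κ → ι → ℝ} {c : ι → ℝ} {B : ℝ} (hw : ∀ i Z, |w i Z| ≤ B)
    (hc : ∀ Z, |c Z| ≤ B) {y : ι → ℝ} (hy : ∀ Z, 0 ≤ y Z) {ε : ℝ} (hε : 0 < ε)
    (hprem : ∀ i, ε ≤ ∑ Z, y Z * w i Z) (hconc : ∑ Z, y Z * c Z ≤ -ε) :
    ∃ m : ι → ℕ, (∀ i, 0 ≤ ∑ Z, (m Z : ℝ) * w i Z) ∧ ∑ Z, (m Z : ℝ) * c Z < 0 := by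
  obtain ⟨N, hN⟩ := exists_nat_gt (Fintype.card ι * B / ε)
  rw [div_lt_iff₀ hε] at hN
  have hN₀ : (0 : ℝ) ≤ N := N.cast_nonneg
  refine ⟨fun Z => ⌊N * y Z⌋₊, fun i => ?_, ?_⟩
  · have := (abs_le.1 (abs_sum_floor_mul_sub_le hy N (hw i))).1
    nlinarith [mul_le_mul_of_nonneg_left (hprem i) hN₀]
  · have := (abs_le.1 (abs_sum_floor_mul_sub_le hy N hc)).2
    nlinarith [mul_le_mul_of_nonneg_left hconc hN₀]

lemma exists_margin_of_common_value {w : κ → ι → ℝ} {c : ι → ℝ} {z : ι} {a : ℝ}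
    (ha : 0 < a) (hwz : ∀ i, w i z = a) (hcz : c z = a) {y : ι → ℝ} (hy : ∀ Z, 0 ≤ y Z)
    (hprem : ∀ i, 0 ≤ ∑ Z, y Z * w i Z) (hconc : ∑ Z, y Z * c Z < 0) :
    ∃ y' : ι → ℝ, (∀ Z, 0 ≤ y' Z) ∧ ∃ ε > 0,
      (∀ i, ε ≤ ∑ Z, y' Z * w i Z) ∧ ∑ Z, y' Z * c Z ≤ -ε := by
  classical
  -- adding mass `t` at `z` raises every sum by `t * a`; take `t * a` to be half the deficit
  set t := -(∑ Z, y Z * c Z) / (2 * a)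
  have hta : t * a = -(∑ Z, y Z * c Z) / 2 := by simp only [t]; field_simp
  have ht : 0 ≤ t := div_nonneg (by linarith) (by linarith)
  set y' : ι → ℝ := y + Pi.single z t
  have hy' : ∀ Z, 0 ≤ y' Z := fun Z =>
    add_nonneg (hy Z) ((Pi.single_nonneg.2 ht : (0 : ι → ℝ) ≤ Pi.single z t) Z)
  have hshift : ∀ v : ι → ℝ, ∑ Z, y' Z * v Z = ∑ Z, y Z * v Z + t * v z := by
    intro v
    simp [y', add_mul, sum_add_distrib, Pi.single_apply]
  refine ⟨y', hy', t * a, by linarith, fun i => ?_, ?_⟩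
  · rw [hshift, hwz]
    linarith [hprem i]
  · rw [hshift, hcz]
    linarith

lemma exists_nat_of_nonpos {w : κ → ι → ℝ} {c : ι → ℝ} (hw : ∀ i Z, w i Z ≤ 0) (hc : ∀ Z, c Z ≤ 0)
    {y : ι → ℝ} (hy : ∀ Z, 0 ≤ y Z) (hprem : ∀ i, 0 ≤ ∑ Z, y Z * w i Z)
    (hconc : ∑ Z, y Z * c Z < 0) :
    ∃ m : ι → ℕ, (∀ i, 0 ≤ ∑ Z, (m Z : ℝ) * w i Z) ∧ ∑ Z, (m Z : ℝ) * c Z < 0 := by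
  classical
  refine ⟨fun Z => if 0 < y Z then 1 else 0, fun i => ?_, ?_⟩
  · have hzero := (sum_eq_zero_iff_of_nonpos fun Z _ => mul_nonpos_of_nonneg_of_nonpos (hy Z)
      (hw i Z)).1 (le_antisymm (sum_nonpos fun Z _ => mul_nonpos_of_nonneg_of_nonpos (hy Z)
      (hw i Z)) (hprem i))
    refine (sum_eq_zero fun Z _ => ?_).ge
    dsimp only
    split_ifs with hyZ
    · simpa [hyZ.ne'] using hzero Z (mem_univ Z)
    · simp
  · obtain ⟨Z₀, -, hZ₀⟩ := exists_lt_of_sum_lt (hconc.trans_eq sum_const_zero.symm)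
    obtain ⟨hyZ₀, hcZ₀⟩ := (mul_neg_iff.1 hZ₀).resolve_right fun h => (hy Z₀).not_gt h.1
    refine (sum_lt_sum (fun Z _ => ?_) ⟨Z₀, mem_univ _, ?_⟩).trans_eq sum_const_zero
    · dsimp only
      split_ifs <;> simp [hc Z]
    · simpa [hyZ₀] using hcZ₀

end Rounding

section Weights

variable {n : ℕ} (γ : ℝ)

lemma abs_wt_le (Z X Y : Finset (Fin n)) : |wt γ Z X Y| ≤ 1 + |γ| := by
  unfold wt
  split_ifs
  · exact (abs_sub _ _).trans (by rw [abs_one])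
  · rw [abs_neg]
    linarith
  · rw [abs_zero]
    positivity

lemma wt_univ (X Y : Finset (Fin n)) : wt γ univ X Y = 1 - γ := if_pos (subset_univ _)

variable {γ}

lemma wt_nonpos (hγ : 1 ≤ γ) (Z X Y : Finset (Fin n)) : wt γ Z X Y ≤ 0 := by
  unfold wt
  split_ifs <;> linarith

lemma exists_counts_of_certificate {k : ℕ} (P : Fin k → Finset (Fin n) × Finset (Fin n))
    (X₀ Y₀ : Finset (Fin n)) {y : Finset (Fin n) → ℝ} (hy : ∀ Z, 0 ≤ y Z)
    (hprem : ∀ i, 0 ≤ ∑ Z, y Z * wt γ Z (P i).1 (P i).2) (hconc : ∑ Z, y Z * wt γ Z X₀ Y₀ < 0) :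
    ∃ m : Finset (Fin n) → ℕ, (∀ i, 0 ≤ ∑ Z, (m Z : ℝ) * wt γ Z (P i).1 (P i).2) ∧
      ∑ Z, (m Z : ℝ) * wt γ Z X₀ Y₀ < 0 := by
  set w := fun i Z => wt γ Z (P i).1 (P i).2
  set c := fun Z => wt γ Z X₀ Y₀
  rcases lt_or_ge γ 1 with hγ | hγ
  · obtain ⟨y', hy', ε, hε, hprem', hconc'⟩ := exists_margin_of_common_value (w := w) (c := c)
      (sub_pos.2 hγ) (fun i => wt_univ γ _ _) (wt_univ γ X₀ Y₀) hy hprem hconc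
    exact exists_nat_of_margin (fun i Z => abs_wt_le γ Z _ _) (fun Z => abs_wt_le γ Z X₀ Y₀) hy'
      hε hprem' hconc'
  · exact exists_nat_of_nonpos (w := w) (c := c) (fun i Z => wt_nonpos hγ Z _ _)
      (fun Z => wt_nonpos hγ Z X₀ Y₀) hy hprem hconc

end Weights

theorem stmt5_general {n k : ℕ} (γ : ℝ)
    (P : Fin k → Finset (Fin n) × Finset (Fin n)) (X₀ Y₀ : Finset (Fin n)) :
    entailsFrom γ P Finset.univ X₀ Y₀ ↔
      ∃ lam : Fin k → ℝ, (∀ i, 0 ≤ lam i) ∧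
        ∀ Z : Finset (Fin n),
          ∑ i, lam i * wt γ Z (P i).1 (P i).2 ≤ wt γ Z X₀ Y₀ := by
  rw [entailsFrom_iff_forall_counts]
  constructor
  · intro hent
    by_contra hno
    obtain ⟨y, hy, hprem, hconc⟩ := exists_certificate_of_not_exists_nonneg_comb _ _ hno
    obtain ⟨m, hm, hm₀⟩ := exists_counts_of_certificate P X₀ Y₀ hy hprem hconc
    exact (hent m fun i _ => hm i).not_gt hm₀
  · rintro ⟨lam, hlam₀, hlam⟩ m hm
    exact sum_mul_nonneg_of_nonneg_comb_le hlam₀ hlam (fun Z => (m Z).cast_nonneg)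
      fun i => hm i (mem_univ i)

theorem stmt5 {n k : ℕ} (γ : ℝ) (hγ0 : 0 ≤ γ) (hγ1 : γ ≤ 1)
    (P : Fin k → Finset (Fin n) × Finset (Fin n)) (X₀ Y₀ : Finset (Fin n)) :
    entailsFrom γ P Finset.univ X₀ Y₀ ↔
      ∃ lam : Fin k → ℝ, (∀ i, 0 ≤ lam i) ∧
        ∀ Z : Finset (Fin n),
          ∑ i, lam i * wt γ Z (P i).1 (P i).2 ≤ wt γ Z X₀ Y₀ :=
  stmt5_general γ P X₀ Y₀
end

section
/- Let γ be a confidence parameter with 0 < γ < 1, let X₀ → Y₀, X₁ → Y₁, …, X_k → Y_k be partial implications over [n] with k ≥ 1, assume that the entailment X₁ → Y₁, …, X_k → Y_k ⊨_γ X₀ → Y₀ holds properly, and let λ = (λ₁,…,λ_k) be a vector of nonnegative reals such that ∑_{i=1}^{k} λ_i · w_Z(X_i → Y_i) ≤ w_Z(X₀ → Y₀) for every transaction Z ⊆ [n]. Then λ_i > 0 for every i ∈ [k]. -/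
/-!
The weight `w_Z(X → Y)` summed over the transactions of `D` is `C_D[XY] - γ C_D[X]`, so
`D ⊨_γ X → Y` says exactly that this total weight is nonnegative. Hence a nonnegative
combination of the premises' weights dominated pointwise by the conclusion's weight certifies
the entailment from the premises it actually involves. If some `λ_j` vanished, the certificate
would show that the premises other than `X_j → Y_j` already entail `X₀ → Y₀`, contradicting
properness.
-/

open Finset

lemma cntD_union_le {n : ℕ} (D : Multiset (Finset (Fin n))) (X Y : Finset (Fin n)) :
    cntD D (X ∪ Y) ≤ cntD D X :=
  Multiset.card_le_card <| Multiset.monotone_filter_right D fun _ h => subset_union_left.trans h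

lemma satPI_iff_le {n : ℕ} (γ : ℝ) (D : Multiset (Finset (Fin n))) (X Y : Finset (Fin n)) :
    satPI γ D X Y ↔ γ * cntD D X ≤ cntD D (X ∪ Y) := by
  refine ⟨?_, Or.inr⟩
  rintro (h | h)
  · have : cntD D (X ∪ Y) = 0 := Nat.eq_zero_of_le_zero (h ▸ cntD_union_le D X Y)
    simp [h, this]
  · exact h

lemma cntD_eq_sum_map {n : ℕ} (D : Multiset (Finset (Fin n))) (X : Finset (Fin n)) :
    (cntD D X : ℝ) = (D.map fun Z => if X ⊆ Z then 1 else 0).sum := by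
  induction D using Multiset.induction with
  | empty => simp [cntD]
  | cons Z D ih =>
    by_cases h : X ⊆ Z <;> simp [cntD, h] at ih ⊢ <;> linarith

lemma wt_eq_sub {n : ℕ} (γ : ℝ) (Z X Y : Finset (Fin n)) :
    wt γ Z X Y = (if X ∪ Y ⊆ Z then 1 else 0) - γ * (if X ⊆ Z then 1 else 0) := by
  by_cases hXY : X ∪ Y ⊆ Z
  · simp [wt, hXY, subset_union_left.trans hXY]
  · by_cases hX : X ⊆ Z <;> simp [wt, hXY, hX]

lemma sum_map_wt {n : ℕ} (γ : ℝ) (D : Multiset (Finset (Fin n))) (X Y : Finset (Fin n)) :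
    (D.map fun Z => wt γ Z X Y).sum = cntD D (X ∪ Y) - γ * cntD D X := by
  simp only [wt_eq_sub, Multiset.sum_map_sub, Multiset.sum_map_mul_left, cntD_eq_sum_map]

lemma satPI_iff_sum_map_wt_nonneg {n : ℕ} (γ : ℝ) (D : Multiset (Finset (Fin n)))
    (X Y : Finset (Fin n)) :
    satPI γ D X Y ↔ 0 ≤ (D.map fun Z => wt γ Z X Y).sum := by
  rw [satPI_iff_le, sum_map_wt, sub_nonneg]

lemma entailsFrom_of_sum_wt_le {n k : ℕ} {γ : ℝ} {P : Fin k → Finset (Fin n) × Finset (Fin n)}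
    {L : Finset (Fin k)} {X₀ Y₀ : Finset (Fin n)} (lam : Fin k → ℝ) (hlam : ∀ i ∈ L, 0 ≤ lam i)
    (hineq : ∀ Z, ∑ i ∈ L, lam i * wt γ Z (P i).1 (P i).2 ≤ wt γ Z X₀ Y₀) :
    entailsFrom γ P L X₀ Y₀ := by
  intro D hD
  rw [satPI_iff_sum_map_wt_nonneg]
  calc 0 ≤ ∑ i ∈ L, lam i * (D.map fun Z => wt γ Z (P i).1 (P i).2).sum :=
        sum_nonneg fun i hi =>
          mul_nonneg (hlam i hi) ((satPI_iff_sum_map_wt_nonneg γ D _ _).1 (hD i hi))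
    _ = (D.map fun Z => ∑ i ∈ L, lam i * wt γ Z (P i).1 (P i).2).sum := by
        simp only [← Multiset.sum_map_mul_left]
        exact (Multiset.sum_map_sum_map D L.val).symm
    _ ≤ (D.map fun Z => wt γ Z X₀ Y₀).sum := Multiset.sum_map_le_sum_map _ _ fun Z _ => hineq Z

theorem stmt6_general {n k : ℕ} (γ : ℝ)
    (P : Fin k → Finset (Fin n) × Finset (Fin n)) (X₀ Y₀ : Finset (Fin n))
    (hproper : properFrom γ P Finset.univ X₀ Y₀)
    (lam : Fin k → ℝ) (hlam : ∀ i, 0 ≤ lam i)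
    (hineq : ∀ Z : Finset (Fin n),
      ∑ i, lam i * wt γ Z (P i).1 (P i).2 ≤ wt γ Z X₀ Y₀) :
    ∀ i, 0 < lam i := by
  intro j
  by_contra! hle
  have hj : lam j = 0 := le_antisymm hle (hlam j)
  refine hproper.2 (univ.erase j) (erase_ssubset (mem_univ j)) ?_
  refine entailsFrom_of_sum_wt_le lam (fun i _ => hlam i) fun Z => ?_
  rw [sum_erase _ (by simp [hj])]
  exact hineq Z

theorem stmt6 {n k : ℕ} (γ : ℝ) (hγ0 : 0 < γ) (hγ1 : γ < 1) (hk : 1 ≤ k)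
    (P : Fin k → Finset (Fin n) × Finset (Fin n)) (X₀ Y₀ : Finset (Fin n))
    (hproper : properFrom γ P Finset.univ X₀ Y₀)
    (lam : Fin k → ℝ) (hlam : ∀ i, 0 ≤ lam i)
    (hineq : ∀ Z : Finset (Fin n),
      ∑ i, lam i * wt γ Z (P i).1 (P i).2 ≤ wt γ Z X₀ Y₀) :
    ∀ i, 0 < lam i :=
  stmt6_general γ P X₀ Y₀ hproper lam hlam hineq
end

section
/- Let γ be a confidence parameter with 0 < γ < 1, let X₀ → Y₀, X₁ → Y₁, …, X_k → Y_k be partial implications over [n] with k ≥ 1, assume that the entailment X₁ → Y₁, …, X_k → Y_k ⊨_γ X₀ → Y₀ holds properly, and let λ = (λ₁,…,λ_k) be a vector of nonnegative reals such that ∑_{i=1}^{k} λ_i · w_Z(X_i → Y_i) ≤ w_Z(X₀ → Y₀) for every transaction Z ⊆ [n]. Then ∑_{i=1}^{k} λ_i = 1. -/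
open Finset

/-!
Evaluating the weight inequality at two transactions pins down `∑ λᵢ`. At `Z = [n]` every
implication is witnessed, so `(1 - γ) ∑ λᵢ ≤ 1 - γ`. At `Z = X₀` the conclusion is violated,
because properness rules out the trivial case `Y₀ ⊆ X₀` (which is entailed by no premises at
all), while every weight is at least `-γ`; hence `-γ ∑ λᵢ ≤ -γ`.
-/

section Weight

variable {n : ℕ} (γ : ℝ)

lemma wt_self_of_not_subset {X Y : Finset (Fin n)} (hY : ¬ Y ⊆ X) : wt γ X X Y = -γ := by
  simp [wt, union_subset_iff, hY]

variable {γ}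

lemma neg_le_wt (hγ : 0 ≤ γ) (Z X Y : Finset (Fin n)) : -γ ≤ wt γ Z X Y := by
  unfold wt
  split_ifs <;> linarith

end Weight

section Entailment

variable {n k : ℕ} {γ : ℝ} {P : Fin k → Finset (Fin n) × Finset (Fin n)} {X Y : Finset (Fin n)}

lemma entailsFrom_of_subset (hγ : γ ≤ 1) (L : Finset (Fin k)) (hYX : Y ⊆ X) :
    entailsFrom γ P L X Y := fun D _ => by
  right
  rw [union_eq_left.2 hYX]
  exact mul_le_of_le_one_left (Nat.cast_nonneg _) hγ

lemma properFrom.not_subset {L : Finset (Fin k)} (hγ : γ ≤ 1) (hL : L.Nonempty)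
    (h : properFrom γ P L X Y) : ¬ Y ⊆ X := fun hYX =>
  h.2 ∅ (empty_ssubset.2 hL) (entailsFrom_of_subset hγ ∅ hYX)

end Entailment

section WeightedSum

variable {ι : Type*} {n : ℕ} {γ : ℝ} (s : Finset ι) (P : ι → Finset (Fin n) × Finset (Fin n))
  (lam : ι → ℝ) (X₀ Y₀ : Finset (Fin n))

lemma sum_le_one_of_wt_univ (hγ1 : γ < 1)
    (h : ∑ i ∈ s, lam i * wt γ univ (P i).1 (P i).2 ≤ wt γ univ X₀ Y₀) :
    ∑ i ∈ s, lam i ≤ 1 := by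
  simp only [wt_univ, ← sum_mul] at h
  exact le_of_mul_le_mul_right (by simpa using h) (sub_pos.2 hγ1)

lemma one_le_sum_of_wt_self (hγ0 : 0 < γ) (hlam : ∀ i ∈ s, 0 ≤ lam i) (hY : ¬ Y₀ ⊆ X₀)
    (h : ∑ i ∈ s, lam i * wt γ X₀ (P i).1 (P i).2 ≤ wt γ X₀ X₀ Y₀) :
    1 ≤ ∑ i ∈ s, lam i := by
  have hlower : -γ * ∑ i ∈ s, lam i ≤ -γ * 1 :=
    calc -γ * ∑ i ∈ s, lam i = ∑ i ∈ s, lam i * -γ := by rw [mul_comm, sum_mul]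
      _ ≤ ∑ i ∈ s, lam i * wt γ X₀ (P i).1 (P i).2 :=
        sum_le_sum fun i hi => mul_le_mul_of_nonneg_left (neg_le_wt hγ0.le _ _ _) (hlam i hi)
      _ ≤ -γ * 1 := by rwa [mul_one, ← wt_self_of_not_subset γ hY]
  exact (mul_le_mul_left_of_neg (neg_neg_of_pos hγ0)).1 hlower

end WeightedSum

theorem stmt8 {n k : ℕ} (γ : ℝ) (hγ0 : 0 < γ) (hγ1 : γ < 1) (hk : 1 ≤ k)
    (P : Fin k → Finset (Fin n) × Finset (Fin n)) (X₀ Y₀ : Finset (Fin n))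
    (hproper : properFrom γ P Finset.univ X₀ Y₀)
    (lam : Fin k → ℝ) (hlam : ∀ i, 0 ≤ lam i)
    (hineq : ∀ Z : Finset (Fin n),
      ∑ i, lam i * wt γ Z (P i).1 (P i).2 ≤ wt γ Z X₀ Y₀) :
    ∑ i, lam i = 1 := by
  have hY : ¬ Y₀ ⊆ X₀ := hproper.not_subset hγ1.le ⟨⟨0, hk⟩, mem_univ _⟩
  exact le_antisymm (sum_le_one_of_wt_univ univ P lam X₀ Y₀ hγ1 (hineq univ))
    (one_le_sum_of_wt_self univ P lam X₀ Y₀ hγ0 (fun i _ => hlam i) hY (hineq X₀))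
end

section
/- A set of two partial implications X₁ → Y₁, X₂ → Y₂ over [n] enforces homogeneity if and only if both X₁ ⊆ X₂Y₂ and X₂ ⊆ X₁Y₁ hold. -/
open Finset

section

variable {n k : ℕ} {P : Fin k → Finset (Fin n) × Finset (Fin n)}

-- Once one premise fires, its conclusion covers every antecedent, so all premises fire.
theorem homogFrom_of_forall_subset_union {L : Finset (Fin k)}
    (h : ∀ i ∈ L, ∀ j ∈ L, (P i).1 ⊆ (P j).1 ∪ (P j).2) : homogFrom P L := by
  intro Z hZ
  by_cases hcov : ∃ i ∈ L, (P i).1 ⊆ Z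
  · obtain ⟨i, hi, hXi⟩ := hcov
    have hXYi : (P i).1 ∪ (P i).2 ⊆ Z := (hZ i hi).resolve_left (not_not.mpr hXi)
    refine Or.inr fun j hj => (hZ j hj).resolve_left ?_
    exact not_not.mpr ((h j hj i hi).trans hXYi)
  · exact Or.inl fun i hi hXi => hcov ⟨i, hi, hXi⟩

-- The transaction `XⱼYⱼ` witnesses `Xⱼ → Yⱼ`, so homogeneity forces it to cover `Xᵢ`.
theorem subset_union_of_homogFrom_pair {i j : Fin k} (h : homogFrom P {i, j}) :
    (P i).1 ⊆ (P j).1 ∪ (P j).2 := by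
  by_contra hXi
  have hresp : ∀ l ∈ ({i, j} : Finset (Fin k)),
      ¬ (P l).1 ⊆ (P j).1 ∪ (P j).2 ∨ (P l).1 ∪ (P l).2 ⊆ (P j).1 ∪ (P j).2 := by
    simp only [mem_insert, mem_singleton, forall_eq_or_imp, forall_eq]
    exact ⟨Or.inl hXi, Or.inr subset_rfl⟩
  rcases h _ hresp with hnone | hall
  · exact hnone j (by simp) subset_union_left
  · exact hXi (subset_union_left.trans (hall i (by simp)))

end

theorem stmt15 {n : ℕ} (X₁ Y₁ X₂ Y₂ : Finset (Fin n)) :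
    homogFrom (![(X₁, Y₁), (X₂, Y₂)]) Finset.univ ↔
      (X₁ ⊆ X₂ ∪ Y₂ ∧ X₂ ⊆ X₁ ∪ Y₁) := by
  have huniv : (Finset.univ : Finset (Fin 2)) = {0, 1} := rfl
  constructor
  · intro h
    rw [huniv] at h
    exact ⟨subset_union_of_homogFrom_pair (j := 1) h,
      subset_union_of_homogFrom_pair (i := 1) (j := 0) (pair_comm (0 : Fin 2) 1 ▸ h)⟩
  · rintro ⟨h₁₂, h₂₁⟩
    apply homogFrom_of_forall_subset_union
    simp only [mem_univ, forall_const, Fin.forall_fin_two, Matrix.cons_val_zero,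
      Matrix.cons_val_one]
    exact ⟨⟨subset_union_left, h₁₂⟩, h₂₁, subset_union_left⟩
end
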